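/- Let λ > 1, α > 0 with 2α > (3λ-1)/(λ-1), and suppose β > 0 satisfies β(λ-1) ≥ 1. Then the equation w(y) = y, with w(y) = β(λe^{-y(1+αy)} - 1)(1 - e^{-y(1+αy)}), has exactly one solution in (0, y_c), where y_c(1+αy_c) = ln λ. -/

import Mathlib

/-!
Put `s = y (1 + α y)`, `u = exp (-s)`, so that `w = β (λ u - 1) (1 - u)` and `w (y_c) = 0`.
Existence: the bounds `s - s²/2 ≤ 1 - u ≤ s` give `w y > β (λ - 1) y ≥ y` as soon as
`(3λ - 1)(1 + α y)² < 2α(λ - 1)`, which holds for small `y > 0`; then `w y - y` changes sign on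
`(0, y_c)`. Uniqueness: at a fixed point `β = y / ((λ u - 1)(1 - u))`, and with `β (λ - 1) ≥ 1`
and `2 s u < 1 - u²` (that is `s < sinh s`) this forces `w' y < 1`. A function whose derivative
is negative at each of its zeros in an interval vanishes there at most once.
-/

open Real Set Filter Topology

section SignAtZero

variable {f : ℝ → ℝ} {f' x : ℝ}

lemma HasDerivAt.eventually_neg_nhdsGT (hf : HasDerivAt f f' x) (hx : f x = 0) (hf' : f' < 0) :
    ∀ᶠ y in 𝓝[>] x, f y < 0 := by
  filter_upwards [(hasDerivAt_iff_tendsto_slope_left_right.1 hf).2.eventually_lt_const hf',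
    self_mem_nhdsWithin] with y hslope (hxy : x < y)
  rw [slope_def_field, hx, sub_zero, div_lt_iff₀ (sub_pos.2 hxy), zero_mul] at hslope
  exact hslope

lemma HasDerivAt.eventually_pos_nhdsLT (hf : HasDerivAt f f' x) (hx : f x = 0) (hf' : f' < 0) :
    ∀ᶠ y in 𝓝[<] x, 0 < f y := by
  filter_upwards [(hasDerivAt_iff_tendsto_slope_left_right.1 hf).1.eventually_lt_const hf',
    self_mem_nhdsWithin] with y hslope (hyx : y < x)
  rw [slope_def_field, hx, sub_zero, div_lt_iff_of_neg (sub_neg.2 hyx), zero_mul] at hslope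
  exact hslope

lemma Set.OrdConnected.subsingleton_zeros_of_hasDerivAt_neg {s : Set ℝ} (hs : s.OrdConnected)
    (hf : ContinuousOn f s) (hf' : ∀ x ∈ s, f x = 0 → ∃ f', HasDerivAt f f' x ∧ f' < 0) :
    {x ∈ s | f x = 0}.Subsingleton := by
  intro a ⟨ha, hfa⟩ b ⟨hb, hfb⟩
  by_contra hne
  wlog hab : a < b generalizing a b
  · exact this hb hfb ha hfa (Ne.symm hne) (lt_of_le_of_ne (not_lt.1 hab) (Ne.symm hne))
  obtain ⟨fa, hda, hfa'⟩ := hf' a ha hfa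
  obtain ⟨c, hfc, hac, hcb⟩ :=
    ((hda.eventually_neg_nhdsGT hfa hfa').and (Ioo_mem_nhdsGT hab)).exists
  have hcbs : Icc c b ⊆ s := hs.out (hs.out ha hb ⟨hac.le, hcb.le⟩) hb
  -- `f` is negative at `c`, and positive just before the first zero `d` after `c`: IVT gives an
  -- earlier zero.
  have hzeros : IsCompact (Icc c b ∩ f ⁻¹' {0}) :=
    isCompact_Icc.of_isClosed_subset
      ((hf.mono hcbs).preimage_isClosed_of_isClosed isClosed_Icc isClosed_singleton)
      inter_subset_left
  obtain ⟨d, ⟨⟨hcd, hdb⟩, hfd⟩, hd_least⟩ :=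
    hzeros.exists_isLeast ⟨b, ⟨hcb.le, le_rfl⟩, hfb⟩
  have hcd : c < d := lt_of_le_of_ne hcd fun h => by simp_all
  obtain ⟨fd, hdd, hfd'⟩ := hf' d (hcbs ⟨hcd.le, hdb⟩) hfd
  obtain ⟨e, hfe, hce, hed⟩ :=
    ((hdd.eventually_pos_nhdsLT hfd hfd').and (Ioo_mem_nhdsLT hcd)).exists
  obtain ⟨z, ⟨hcz, hze⟩, hfz⟩ :=
    intermediate_value_Ioo hce.le (hf.mono ((Icc_subset_Icc_right (hed.trans_le hdb).le).trans
      hcbs)) ⟨hfc, hfe⟩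
  exact (hd_least ⟨⟨hcz.le, (hze.trans hed).le.trans hdb⟩, hfz⟩).not_gt (hze.trans hed)

end SignAtZero

lemma Real.exp_neg_le_one_sub_add_sq_div_two {s : ℝ} (hs : 0 ≤ s) :
    exp (-s) ≤ 1 - s + s ^ 2 / 2 := by
  have hprod : exp (-s) * exp s = 1 := by rw [← exp_add, neg_add_cancel, exp_zero]
  have hq := quadratic_le_exp_of_nonneg hs
  nlinarith [exp_pos (-s), mul_le_mul_of_nonneg_left hq (exp_pos (-s)).le, pow_nonneg hs 4]

lemma Real.two_mul_mul_exp_neg_lt {s : ℝ} (hs : 0 < s) : 2 * s * exp (-s) < 1 - exp (-s) ^ 2 := by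
  have hprod : exp s * exp (-s) = 1 := by rw [← exp_add, add_neg_cancel, exp_zero]
  have hsinh : 2 * s < exp s - exp (-s) := by
    linarith [self_lt_sinh_iff.2 hs, sinh_eq s]
  nlinarith [mul_lt_mul_of_pos_right hsinh (exp_pos (-s))]

namespace CooperativeHunting

noncomputable def w (lam α β y : ℝ) : ℝ :=
  β * (lam * exp (-(y * (1 + α * y))) - 1) * (1 - exp (-(y * (1 + α * y))))

noncomputable def wDeriv (lam α β y : ℝ) : ℝ :=
  β * (1 + 2 * α * y) *
    (exp (-(y * (1 + α * y))) * (2 * lam * exp (-(y * (1 + α * y))) - (lam + 1)))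

variable {lam α β y : ℝ}

lemma hasDerivAt_w (lam α β y : ℝ) : HasDerivAt (w lam α β) (wDeriv lam α β y) y := by
  have hs : HasDerivAt (fun y => -(y * (1 + α * y))) (-(1 + 2 * α * y)) y :=
    ((hasDerivAt_id' y).fun_mul (((hasDerivAt_id' y).const_mul α).const_add 1)).fun_neg.congr_deriv
      (by ring)
  have hu := hs.exp
  exact ((((hu.const_mul lam).sub_const 1).const_mul β).fun_mul (hu.const_sub 1)).congr_deriv
    (by rw [wDeriv]; ring)

lemma continuous_w (lam α β : ℝ) : Continuous (w lam α β) := by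
  unfold w; fun_prop

lemma w_eq_zero (hlam : 0 < lam) (hy : y * (1 + α * y) = log lam) : w lam α β y = 0 := by
  rw [w, hy, exp_neg, exp_log hlam, mul_inv_cancel₀ hlam.ne', sub_self, mul_zero, zero_mul]

lemma lt_w (hlam : 1 < lam) (hα : 0 < α) (hβ : 0 < β) (hR : 1 ≤ β * (lam - 1)) (hy : 0 < y)
    (hsmall : (3 * lam - 1) * (1 + α * y) ^ 2 < 2 * α * (lam - 1)) : y < w lam α β y := by
  set s := y * (1 + α * y) with hs_def
  have hs : 0 < s := mul_pos hy (by positivity)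
  set t := 1 - exp (-s) with ht_def
  have ht_le : t ≤ s := by linarith [one_sub_le_exp_neg s]
  have ht_ge : s - s ^ 2 / 2 ≤ t := by linarith [exp_neg_le_one_sub_add_sq_div_two hs.le]
  have ht0 : 0 ≤ t := sub_nonneg.2 (exp_le_one_iff.2 (neg_nonpos.2 hs.le))
  have hquad : (lam - 1) * s - (3 * lam - 1) / 2 * s ^ 2 ≤ (lam * (1 - t) - 1) * t := by
    nlinarith [mul_le_mul ht_le ht_le ht0 hs.le]
  have hgain : (lam - 1) * y < (lam - 1) * s - (3 * lam - 1) / 2 * s ^ 2 := by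
    have : 0 < y ^ 2 * (2 * α * (lam - 1) - (3 * lam - 1) * (1 + α * y) ^ 2) :=
      mul_pos (by positivity) (by linarith)
    rw [hs_def]; nlinarith
  have hw : w lam α β y = β * ((lam * (1 - t) - 1) * t) := by
    rw [w, ht_def]; ring
  rw [hw]
  nlinarith [mul_lt_mul_of_pos_left (hgain.trans_le hquad) hβ]

lemma exists_mem_Ioo_lt_w {yc : ℝ} (hlam : 1 < lam) (hα : 0 < α)
    (hcond : 3 * lam - 1 < 2 * α * (lam - 1)) (hβ : 0 < β) (hR : 1 ≤ β * (lam - 1))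
    (hyc : 0 < yc) :
    ∃ y ∈ Ioo 0 yc, y < w lam α β y := by
  have hsmall : ∀ᶠ y in 𝓝[>] 0, (3 * lam - 1) * (1 + α * y) ^ 2 < 2 * α * (lam - 1) := by
    have hcont : Continuous fun y : ℝ => (3 * lam - 1) * (1 + α * y) ^ 2 := by fun_prop
    refine nhdsWithin_le_nhds (hcont.tendsto' 0 _ ?_ |>.eventually_lt_const hcond)
    ring
  obtain ⟨y, hy, hyI⟩ := (hsmall.and (Ioo_mem_nhdsGT hyc)).exists
  exact ⟨y, hyI, lt_w hlam hα hβ hR hyI.1 hy⟩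

lemma two_mul_sub_one_mul_lt {lam u s : ℝ} (hlam : 1 < lam) (hu0 : 0 < u) (hu1 : u < 1)
    (hsu : 2 * s * u < 1 - u ^ 2) (hB : 0 < u * (2 * lam * u - (lam + 1))) :
    2 * (lam - 1) * s * (u * (2 * lam * u - (lam + 1))) <
      (lam * u - 1) * (1 - u) * (lam - 1 + u * (2 * lam * u - (lam + 1))) := by
  set B := u * (2 * lam * u - (lam + 1))
  have hid : u * ((lam * u - 1) * (1 - u) * (lam - 1 + B)) - (lam - 1) * (1 - u ^ 2) * B
      = lam * u * (1 - u) ^ 3 * (2 * lam * u + (lam - 1)) := by ring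
  have hpos : 0 < lam * u * (1 - u) ^ 3 * (2 * lam * u + (lam - 1)) := by
    have : 0 < 1 - u := by linarith
    have : 0 < 2 * lam * u + (lam - 1) := by nlinarith
    positivity
  have hsB : u * (2 * (lam - 1) * s * B) < (lam - 1) * (1 - u ^ 2) * B := by
    have := mul_lt_mul_of_pos_left hsu (mul_pos (by linarith : (0:ℝ) < lam - 1) hB)
    linarith
  exact lt_of_mul_lt_mul_left (by linarith) hu0.le

lemma wDeriv_lt_one (hlam : 1 < lam) (hα : 0 < α) (hβ : 0 < β) (hR : 1 ≤ β * (lam - 1))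
    (hy : 0 < y) (hfix : w lam α β y = y) : wDeriv lam α β y < 1 := by
  set s := y * (1 + α * y)
  have hs : 0 < s := mul_pos hy (by positivity)
  set u := exp (-s)
  have hu0 : 0 < u := exp_pos _
  have hu1 : u < 1 := exp_lt_one_iff.2 (by linarith)
  set B := u * (2 * lam * u - (lam + 1))
  have hy2 : 0 < 1 + 2 * α * y := by positivity
  have hD : wDeriv lam α β y = β * (1 + 2 * α * y) * B := rfl
  rcases le_or_gt B 0 with hB | hB
  · rw [hD]
    nlinarith [mul_pos hβ hy2]
  have hkey := two_mul_sub_one_mul_lt hlam hu0 hu1 (two_mul_mul_exp_neg_lt hs) hB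
  have hA : β * ((lam * u - 1) * (1 - u)) = y := by rw [← hfix, w]; ring
  have hβkey : 2 * (lam - 1) * s * B * β < y * (lam - 1 + B) := by
    rw [← hA]; nlinarith [mul_lt_mul_of_pos_left hkey hβ]
  have hyB : y * B ≤ β * (lam - 1) * (y * B) := le_mul_of_one_le_left (by positivity) hR
  have hcancel : 2 * s * B * β < y + β * y * B := by
    refine lt_of_mul_lt_mul_left (a := lam - 1) ?_ (by linarith)
    nlinarith
  have hprod : wDeriv lam α β y * y < 1 * y := by
    rw [hD]; nlinarith
  exact lt_of_mul_lt_mul_right hprod hy.le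

end CooperativeHunting

open CooperativeHunting

theorem w_fixed_point_unique (lam α β yc : ℝ) (hlam : 1 < lam) (hα : 0 < α)
    (hα2 : 2 * α > (3 * lam - 1) / (lam - 1)) (hβ : 0 < β)
    (hR : 1 ≤ β * (lam - 1))
    (hyc : 0 < yc) (hyceq : yc * (1 + α * yc) = Real.log lam) :
    let w : ℝ → ℝ := fun y =>
      β * (lam * Real.exp (-(y * (1 + α * y))) - 1) * (1 - Real.exp (-(y * (1 + α * y))))
    ∃! y : ℝ, y ∈ Set.Ioo 0 yc ∧ w y = y := by
  show ∃! y, y ∈ Ioo 0 yc ∧ w lam α β y = y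
  have hcond : 3 * lam - 1 < 2 * α * (lam - 1) := by
    rwa [gt_iff_lt, div_lt_iff₀ (by linarith)] at hα2
  set f := fun y => w lam α β y - y
  have hf : Continuous f := (continuous_w lam α β).sub continuous_id
  obtain ⟨m, hm, hmw⟩ := exists_mem_Ioo_lt_w hlam hα hcond hβ hR hyc
  have hf_yc : f yc < 0 := by simp [f, w_eq_zero (by linarith) hyceq, hyc]
  obtain ⟨c, hc, hfc⟩ :=
    intermediate_value_Ioo' hm.2.le hf.continuousOn ⟨hf_yc, sub_pos.2 hmw⟩
  have hzeros : {x ∈ Ioo 0 yc | f x = 0}.Subsingleton :=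
    ordConnected_Ioo.subsingleton_zeros_of_hasDerivAt_neg hf.continuousOn
      fun x hx hfx => ⟨_, (hasDerivAt_w lam α β x).sub (hasDerivAt_id x),
        sub_neg.2 (wDeriv_lt_one hlam hα hβ hR hx.1 (sub_eq_zero.1 hfx))⟩
  have hc_mem : c ∈ Ioo 0 yc := ⟨hm.1.trans hc.1, hc.2⟩
  exact ⟨c, ⟨hc_mem, sub_eq_zero.1 hfc⟩,
    fun y hy => hzeros ⟨hy.1, sub_eq_zero.2 hy.2⟩ ⟨hc_mem, hfc⟩⟩
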